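/- arXiv:1405.1194 — 3 statements merged into one kernel-verified Lean document; each statement's English description precedes it below -/
import Mathlib

section
/- Any quantizer Q: V → ℝⁿ whose range has at most 2^R points has worst-case distortion sup_{x∈V} ‖x − Q(x)‖₂ ≥ (vol(V)·Γ(1+n/2)/π^{n/2})^{1/n} · 2^{-R/n}. -/
open MeasureTheory

/-! If `D` is the worst-case distortion, every point of `V` lies within `D` of one of the at most
`2^R` codepoints, so `V` is covered by `2^R` closed balls of radius `D` and
`vol V ≤ 2^R · D^n · π^{n/2} / Γ(1 + n/2)`; solving for `D` gives the bound. -/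

open Metric Real Finset

theorem bddAbove_dist_apply_of_isBounded {α : Type*} [PseudoMetricSpace α] {V : Set α}
    {Q : α → α} (hV : Bornology.IsBounded V) (hQ : Bornology.IsBounded (Q '' V)) :
    BddAbove {d : ℝ | ∃ x ∈ V, d = dist x (Q x)} := by
  obtain ⟨C, hC⟩ := isBounded_iff.mp (hV.union hQ)
  exact ⟨C, fun _ ⟨x, hx, hd⟩ => hd ▸ hC (.inl hx) (.inr ⟨x, hx, rfl⟩)⟩

theorem MeasureTheory.Measure.addHaar_real_le_card_mul_of_subset_biUnion_closedBall
    {E : Type*} [NormedAddCommGroup E] [MeasurableSpace E] [BorelSpace E] [ProperSpace E]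
    (μ : Measure E) [μ.IsAddHaarMeasure] {V : Set E} {S : Finset E} {r : ℝ}
    (hV : V ⊆ ⋃ s ∈ S, closedBall s r) : μ.real V ≤ #S * μ.real (closedBall 0 r) :=
  calc μ.real V ≤ μ.real (⋃ s ∈ S, closedBall s r) :=
        measureReal_mono hV (measure_biUnion_lt_top S.finite_toSet
          fun _ _ => measure_closedBall_lt_top).ne
    _ ≤ ∑ s ∈ S, μ.real (closedBall s r) := measureReal_biUnion_finset_le S _
    _ = #S * μ.real (closedBall 0 r) := by
        simp only [μ.addHaar_real_closedBall_center, sum_const, nsmul_eq_mul]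

theorem EuclideanSpace.volume_real_closedBall_fin {n : ℕ} (hn : n ≠ 0)
    (x : EuclideanSpace ℝ (Fin n)) {r : ℝ} (hr : 0 ≤ r) :
    volume.real (closedBall x r) = r ^ n * (π ^ ((n : ℝ) / 2) / Gamma (1 + n / 2)) := by
  have : Nonempty (Fin n) := ⟨⟨0, Nat.pos_of_ne_zero hn⟩⟩
  have hsqrt : √π ^ n = π ^ ((n : ℝ) / 2) := by
    rw [sqrt_eq_rpow, ← rpow_mul_natCast pi_nonneg]
    ring_nf
  rw [measureReal_def, EuclideanSpace.volume_closedBall, Fintype.card_fin, ENNReal.toReal_mul,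
    ENNReal.toReal_pow, ENNReal.toReal_ofReal hr, ENNReal.toReal_ofReal (by positivity), hsqrt,
    add_comm 1]

theorem rpow_one_div_mul_two_rpow_neg_le {n R : ℕ} (hn : n ≠ 0) {v b D : ℝ} (hv : 0 ≤ v)
    (hb : 0 < b) (hD : 0 ≤ D) (h : v ≤ 2 ^ R * (D ^ n * b)) :
    (v / b) ^ ((1 : ℝ) / n) * 2 ^ (-(R : ℝ) / n) ≤ D := by
  have hn' : (0 : ℝ) < n := by exact_mod_cast Nat.pos_of_ne_zero hn
  have h2R : (2 : ℝ) ^ (-(R : ℝ) / n) = ((2 ^ R)⁻¹) ^ (n : ℝ)⁻¹ := by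
    rw [inv_rpow (by positivity), ← rpow_natCast, ← rpow_mul zero_le_two, ← rpow_neg zero_le_two,
      neg_div, div_eq_mul_inv]
  rw [h2R, one_div, ← mul_rpow (by positivity) (by positivity), ← div_eq_mul_inv,
    rpow_inv_le_iff_of_pos (by positivity) hD hn', rpow_natCast, div_div,
    div_le_iff₀ (by positivity)]
  linarith

theorem stmt_1_general (n R : ℕ) (hn : 0 < n)
    (V : Set (EuclideanSpace ℝ (Fin n)))
    (hVb : Bornology.IsBounded V)
    (Q : EuclideanSpace ℝ (Fin n) → EuclideanSpace ℝ (Fin n))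
    (S : Finset (EuclideanSpace ℝ (Fin n))) (hQS : Q '' V ⊆ S) (hcard : S.card ≤ 2 ^ R) :
    ((volume V).toReal * Real.Gamma (1 + (n : ℝ) / 2) / Real.pi ^ ((n : ℝ) / 2)) ^ ((1 : ℝ) / n)
      * 2 ^ (-(R : ℝ) / n) ≤ sSup {d : ℝ | ∃ x ∈ V, d = dist x (Q x)} := by
  set D := sSup {d : ℝ | ∃ x ∈ V, d = dist x (Q x)}
  have hD : 0 ≤ D := sSup_nonneg fun _ ⟨x, _, hd⟩ => hd ▸ dist_nonneg
  have hbdd := bddAbove_dist_apply_of_isBounded hVb (S.finite_toSet.isBounded.subset hQS)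
  have hcover : V ⊆ ⋃ s ∈ S, closedBall s D := fun x hx =>
    Set.mem_biUnion (hQS ⟨x, hx, rfl⟩) (mem_closedBall.mpr (le_csSup hbdd ⟨x, hx, rfl⟩))
  have hvol := volume.addHaar_real_le_card_mul_of_subset_biUnion_closedBall hcover
  rw [EuclideanSpace.volume_real_closedBall_fin hn.ne' _ hD] at hvol
  rw [← div_div_eq_mul_div]
  refine rpow_one_div_mul_two_rpow_neg_le hn.ne' measureReal_nonneg (by positivity) hD
    (hvol.trans (mul_le_mul_of_nonneg_right (by exact_mod_cast hcard) (by positivity)))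

/-- Any quantizer `Q : V → ℝⁿ` whose range has at most `2^R` points has worst-case
distortion at least `(vol(V)·Γ(1+n/2)/π^{n/2})^{1/n} · 2^{-R/n}`. -/
theorem stmt_1 (n R : ℕ) (hn : 0 < n) (hR : 0 < R)
    (V : Set (EuclideanSpace ℝ (Fin n)))
    (hVb : Bornology.IsBounded V) (hVm : MeasurableSet V) (hVpos : 0 < volume V)
    (Q : EuclideanSpace ℝ (Fin n) → EuclideanSpace ℝ (Fin n))
    (S : Finset (EuclideanSpace ℝ (Fin n))) (hQS : Q '' V ⊆ S) (hcard : S.card ≤ 2 ^ R) :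
    ((volume V).toReal * Real.Gamma (1 + (n : ℝ) / 2) / Real.pi ^ ((n : ℝ) / 2)) ^ ((1 : ℝ) / n)
      * 2 ^ (-(R : ℝ) / n) ≤ sSup {d : ℝ | ∃ x ∈ V, d = dist x (Q x)} :=
  stmt_1_general n R hn V hVb Q S hQS hcard
end

section
/- Consider the greedy r-th order Σ∆ scheme with the 2L-level midrise scalar quantizer Q with step Δ (codebook {(±j − 1/2)Δ : j = 1,…,L}, mapping each real to its closest codebook element, saturating at (±L∓1/2)Δ). If the input sequence c satisfies ‖c‖_∞ ≤ Δ(L − 2^{r−1} + 1/2), then the state variable sequence u of the scheme satisfies ‖u‖_∞ ≤ Δ/2, i.e., the scheme is stable. -/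
/-!
By induction on `i`, `|u_i^{(j)}| ≤ 2^{r-j} Δ/2` for `1 ≤ j ≤ r`. Telescoping the recursion in `j`
shows that `u_i^{(r)}` is exactly the quantization error `t - Q t` of the quantizer input
`t = ∑_j u_{i-1}^{(j)} + c_i`; the induction hypothesis and the bound on `c` give `|t| ≤ LΔ`, so
`|u_i^{(r)}| ≤ Δ/2`. The bounds for smaller `j` follow downwards from
`u_i^{(j)} = u_i^{(j+1)} - u_{i-1}^{(j+1)}`, which at most doubles the bound at each step.
-/

open Finset

theorem eq_add_sum_Icc_of_eq_add {M : Type*} [AddCommMonoid M] (v w : ℕ → M) (n : ℕ)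
    (h : ∀ j ∈ Icc 1 n, v j = w j + v (j - 1)) : v n = v 0 + ∑ k ∈ Icc 1 n, w k := by
  induction n with
  | zero => simp
  | succ n ih =>
    rw [sum_Icc_succ_top (by omega), h (n + 1) (by simp), Nat.add_sub_cancel,
      ih fun j hj => h j (by simp only [mem_Icc] at hj ⊢; omega)]
    abel

theorem sum_Icc_two_pow_sub (r : ℕ) : ∑ k ∈ Icc 1 r, (2 : ℝ) ^ (r - k) = 2 ^ r - 1 := by
  induction r with
  | zero => simp
  | succ r ih =>
    rw [sum_Icc_succ_top (by omega), Nat.sub_self, pow_zero]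
    have : ∑ k ∈ Icc 1 r, (2 : ℝ) ^ (r + 1 - k) = 2 * ∑ k ∈ Icc 1 r, (2 : ℝ) ^ (r - k) := by
      rw [mul_sum]
      refine sum_congr rfl fun k hk => ?_
      rw [← pow_succ', Nat.sub_add_comm (mem_Icc.1 hk).2]
    rw [this, ih]
    ring

theorem abs_sum_Icc_le_of_abs_le_two_pow {r : ℕ} {b : ℝ} {x : ℕ → ℝ}
    (h : ∀ k ∈ Icc 1 r, |x k| ≤ 2 ^ (r - k) * b) : |∑ k ∈ Icc 1 r, x k| ≤ (2 ^ r - 1) * b :=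
  calc |∑ k ∈ Icc 1 r, x k| ≤ ∑ k ∈ Icc 1 r, |x k| := abs_sum_le_sum_abs _ _
    _ ≤ ∑ k ∈ Icc 1 r, 2 ^ (r - k) * b := sum_le_sum h
    _ = (2 ^ r - 1) * b := by rw [← sum_mul, sum_Icc_two_pow_sub]

theorem two_pow_le_two_mul_two_pow_pred (r : ℕ) : (2 : ℝ) ^ r ≤ 2 * 2 ^ (r - 1) := by
  rw [← pow_succ']
  exact pow_le_pow_right₀ one_le_two (by omega)

section

variable {r L : ℕ} {Δ : ℝ} {prev cur : ℕ → ℝ}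

theorem abs_last_state_le (hΔ : 0 ≤ Δ) {Q : ℝ → ℝ}
    (hQ : ∀ t : ℝ, |t| ≤ L * Δ → |t - Q t| ≤ Δ / 2)
    {x : ℝ} (hx : |x| ≤ Δ * (L - 2 ^ (r - 1) + 1 / 2))
    (hcur₀ : cur 0 = x - Q (∑ j ∈ Icc 1 r, prev j + x))
    (hcur : ∀ j ∈ Icc 1 r, cur j = prev j + cur (j - 1))
    (hprev : ∀ k ∈ Icc 1 r, |prev k| ≤ 2 ^ (r - k) * (Δ / 2)) :
    |cur r| ≤ Δ / 2 := by
  set t := ∑ j ∈ Icc 1 r, prev j + x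
  have ht : |t| ≤ L * Δ :=
    calc |t| ≤ (2 ^ r - 1) * (Δ / 2) + Δ * (L - 2 ^ (r - 1) + 1 / 2) :=
          (abs_add_le _ _).trans (add_le_add (abs_sum_Icc_le_of_abs_le_two_pow hprev) hx)
      _ ≤ L * Δ := by nlinarith [two_pow_le_two_mul_two_pow_pred r]
  have hcur_r : cur r = t - Q t := by
    rw [eq_add_sum_Icc_of_eq_add cur prev r hcur, hcur₀]
    ring
  exact hcur_r ▸ hQ t ht

theorem abs_state_le_two_pow (hcur : ∀ j ∈ Icc 1 r, cur j = prev j + cur (j - 1))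
    (hprev : ∀ k ∈ Icc 1 r, |prev k| ≤ 2 ^ (r - k) * (Δ / 2)) (hlast : |cur r| ≤ Δ / 2) :
    ∀ j ∈ Icc 1 r, |cur j| ≤ 2 ^ (r - j) * (Δ / 2) := by
  intro j hj
  obtain ⟨hj₁, hjr⟩ := mem_Icc.1 hj
  induction hjr using Nat.decreasingInduction with
  | self => simpa using hlast
  | of_succ j hjr ih =>
    have hcur_j : cur j = cur (j + 1) - prev (j + 1) := by
      rw [hcur (j + 1) (mem_Icc.2 ⟨by omega, by omega⟩), Nat.add_sub_cancel]
      ring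
    calc |cur j| ≤ |cur (j + 1)| + |prev (j + 1)| := hcur_j ▸ abs_sub _ _
      _ ≤ 2 ^ (r - (j + 1)) * (Δ / 2) + 2 ^ (r - (j + 1)) * (Δ / 2) :=
          add_le_add (ih (mem_Icc.2 ⟨by omega, by omega⟩) (by omega))
            (hprev _ (mem_Icc.2 ⟨by omega, by omega⟩))
      _ = 2 ^ (r - j) * (Δ / 2) := by
          rw [← two_mul, ← mul_assoc, ← pow_succ']
          congr 2
          omega

end

theorem stmt_9_general (r L : ℕ) (Δ : ℝ) (hΔ : 0 < Δ)
    (Q : ℝ → ℝ) (hQ : ∀ t : ℝ, |t| ≤ L * Δ → |t - Q t| ≤ Δ / 2)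
    (c q : ℕ → ℝ) (u : ℕ → ℕ → ℝ)
    (hu0 : ∀ j, u 0 j = 0)
    (hq : ∀ i, 1 ≤ i → q i = Q ((∑ j ∈ Finset.Icc 1 r, u (i - 1) j) + c i))
    (huaux0 : ∀ i, 1 ≤ i → u i 0 = c i - q i)
    (huaux : ∀ i, 1 ≤ i → ∀ j ∈ Finset.Icc 1 r, u i j = u (i - 1) j + u i (j - 1))
    (hc : ∀ i, 1 ≤ i → |c i| ≤ Δ * (L - 2 ^ (r - 1) + 1 / 2)) :
    ∀ i, |u i r| ≤ Δ / 2 := by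
  have hrec (i : ℕ) : ∀ j ∈ Icc 1 r, u (i + 1) j = u i j + u (i + 1) (j - 1) := by
    simpa using huaux (i + 1) (by omega)
  have hinit (i : ℕ) : u (i + 1) 0 = c (i + 1) - Q (∑ j ∈ Icc 1 r, u i j + c (i + 1)) := by
    rw [huaux0 _ (by omega), hq _ (by omega), Nat.add_sub_cancel]
  have hlast (i : ℕ) (hi : ∀ k ∈ Icc 1 r, |u i k| ≤ 2 ^ (r - k) * (Δ / 2)) :
      |u (i + 1) r| ≤ Δ / 2 :=
    abs_last_state_le hΔ.le hQ (hc _ (by omega)) (hinit i) (hrec i) hi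
  have hbound (i : ℕ) : ∀ k ∈ Icc 1 r, |u i k| ≤ 2 ^ (r - k) * (Δ / 2) := by
    induction i with
    | zero => intro k _; rw [hu0, abs_zero]; positivity
    | succ i ih => exact abs_state_le_two_pow (hrec i) ih (hlast i ih)
  rintro (_ | i)
  · rw [hu0, abs_zero]; positivity
  · exact hlast i (hbound i)

/-- Stability of the greedy `r`-th order Σ∆ scheme with the `2L`-level midrise quantizer
of step `Δ`: if `‖c‖_∞ ≤ Δ(L − 2^{r−1} + 1/2)` then the state variables satisfy
`‖u‖_∞ ≤ Δ/2`.  Here `u i j` denotes the auxiliary state variable `u_i^{(j)}`,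
`u_i := u_i^{(r)}`, and the scalar quantizer `Q` satisfies `|t − Q(t)| ≤ Δ/2` whenever
`|t| ≤ LΔ`. -/
theorem stmt_9 (r L : ℕ) (hr : 1 ≤ r) (hL : 1 ≤ L) (Δ : ℝ) (hΔ : 0 < Δ)
    (Q : ℝ → ℝ) (hQ : ∀ t : ℝ, |t| ≤ L * Δ → |t - Q t| ≤ Δ / 2)
    (c q : ℕ → ℝ) (u : ℕ → ℕ → ℝ)
    (hu0 : ∀ j, u 0 j = 0)
    (hq : ∀ i, 1 ≤ i → q i = Q ((∑ j ∈ Finset.Icc 1 r, u (i - 1) j) + c i))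
    (huaux0 : ∀ i, 1 ≤ i → u i 0 = c i - q i)
    (huaux : ∀ i, 1 ≤ i → ∀ j ∈ Finset.Icc 1 r, u i j = u (i - 1) j + u i (j - 1))
    (hc : ∀ i, 1 ≤ i → |c i| ≤ Δ * (L - 2 ^ (r - 1) + 1 / 2)) :
    ∀ i, |u i r| ≤ Δ / 2 :=
  stmt_9_general r L Δ hΔ Q hQ c q u hu0 hq huaux0 huaux hc
end

section
/- Let Φ ∈ ℝ^{n×N} be a frame (full row rank), r ≥ 1, and D the N×N first-difference matrix. Then the r-th order Sobolev dual Φ̃^{(r)} := (D^{−r}Φᵀ)† D^{−r} (interpreted appropriately as an n×N matrix) is a dual frame of Φ, i.e., Φ̃^{(r)} Φᵀ = I_n, and among all dual frames Φ̃ of Φ it minimizes the operator norm ‖Φ̃ D^r‖_{2→2}. -/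
open Matrix
/-- The ℓ₂ → ℓ₂ operator norm of a real matrix. -/
noncomputable def matOpNorm {a b : ℕ} (M : Matrix (Fin a) (Fin b) ℝ) : ℝ :=
  ‖LinearMap.toContinuousLinearMap (Matrix.toEuclideanLin M)‖

/-- Moore–Penrose pseudoinverse of a full-column-rank matrix. -/
noncomputable def pinv {a b : ℕ} (M : Matrix (Fin a) (Fin b) ℝ) : Matrix (Fin b) (Fin a) ℝ :=
  (Mᵀ * M)⁻¹ * Mᵀ

/-!
Writing `M = D^{-r} Φᵀ`, a matrix `Φ̃` is a dual frame of `Φ` exactly when `L = Φ̃ D^r` is a left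
inverse of `M`, and the Sobolev dual corresponds to `L = M†`. Since `M` has full column rank,
`M M†` is an orthogonal projection, so `M† = L (M M†)` has norm at most `‖L‖ ‖M M†‖ ≤ ‖L‖`.
-/

open scoped Matrix.Norms.L2Operator

namespace Matrix

theorem isUnit_of_rank_eq_card {m K : Type*} [Fintype m] [DecidableEq m] [Field K]
    {A : Matrix m m K} (h : A.rank = Fintype.card m) : IsUnit A :=
  linearIndependent_cols_iff_isUnit.1 <|
    linearIndependent_iff_card_eq_finrank_span.2 <| by
      rw [Set.finrank, ← rank_eq_finrank_span_cols, h]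

theorem isUnit_det_transpose_mul_self_of_rank_eq_card {m n R : Type*} [Fintype m] [Fintype n]
    [DecidableEq n] [Field R] [LinearOrder R] [IsStrictOrderedRing R] {A : Matrix m n R}
    (h : A.rank = Fintype.card n) : IsUnit (Aᵀ * A).det :=
  (isUnit_iff_isUnit_det _).1 <| isUnit_of_rank_eq_card (by rw [rank_transpose_mul_self, h])

theorem det_eq_one_of_isLowerTriangular {m R : Type*} [Fintype m] [DecidableEq m] [LinearOrder m]
    [CommRing R] {A : Matrix m m R} (hA : A.IsLowerTriangular) (hdiag : ∀ i, A i i = 1) :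
    A.det = 1 := by
  simp [det_of_isLowerTriangular A hA, hdiag]

theorem det_eq_one_of_eq_firstDifference {N : ℕ} {R : Type*} [CommRing R]
    {D : Matrix (Fin N) (Fin N) R}
    (hD : ∀ i j : Fin N, D i j = if (i : ℕ) = j then 1 else if (j : ℕ) + 1 = i then -1 else 0) :
    D.det = 1 := by
  refine det_eq_one_of_isLowerTriangular (fun i j hij => ?_) (fun i => by simp [hD])
  have hij : (i : ℕ) < j := hij
  rw [hD, if_neg (by omega), if_neg (by omega)]

end Matrix

theorem matOpNorm_eq_norm {a b : ℕ} (M : Matrix (Fin a) (Fin b) ℝ) : matOpNorm M = ‖M‖ :=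
  rfl

section Pinv

variable {a b : ℕ} {M : Matrix (Fin a) (Fin b) ℝ}

theorem pinv_mul_self (hM : IsUnit (Mᵀ * M).det) : pinv M * M = 1 := by
  rw [pinv, Matrix.mul_assoc, nonsing_inv_mul _ hM]

theorem isStarProjection_mul_pinv (hM : IsUnit (Mᵀ * M).det) :
    IsStarProjection (M * pinv M) where
  isIdempotentElem := by
    rw [IsIdempotentElem, Matrix.mul_assoc, ← Matrix.mul_assoc (pinv M), pinv_mul_self hM,
      Matrix.one_mul]
  isSelfAdjoint := by
    rw [IsSelfAdjoint, star_eq_conjTranspose, conjTranspose_eq_transpose_of_trivial, pinv,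
      transpose_mul, transpose_mul, transpose_nonsing_inv, transpose_mul, transpose_transpose,
      Matrix.mul_assoc]

theorem matOpNorm_pinv_le_of_mul_eq_one (hM : IsUnit (Mᵀ * M).det)
    {L : Matrix (Fin b) (Fin a) ℝ} (hL : L * M = 1) : matOpNorm (pinv M) ≤ matOpNorm L := by
  rw [matOpNorm_eq_norm, matOpNorm_eq_norm]
  calc ‖pinv M‖ = ‖L * (M * pinv M)‖ := by rw [← Matrix.mul_assoc, hL, Matrix.one_mul]
    _ ≤ ‖L‖ * ‖M * pinv M‖ := l2_opNorm_mul _ _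
    _ ≤ ‖L‖ := mul_le_of_le_one_right (norm_nonneg _) (isStarProjection_mul_pinv hM).norm_le

end Pinv

theorem stmt_11_general (n N : ℕ) (r : ℕ)
    (Φ : Matrix (Fin n) (Fin N) ℝ) (hrank : Φ.rank = n)
    (D : Matrix (Fin N) (Fin N) ℝ)
    (hD : ∀ i j : Fin N, D i j =
      if (i : ℕ) = j then 1 else if (j : ℕ) + 1 = i then -1 else 0)
    (Φd : Matrix (Fin n) (Fin N) ℝ)
    (hΦd : Φd = pinv ((D⁻¹) ^ r * Φ.transpose) * (D⁻¹) ^ r) :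
    Φd * Φ.transpose = 1 ∧
    ∀ G : Matrix (Fin n) (Fin N) ℝ, G * Φ.transpose = 1 →
      matOpNorm (Φd * D ^ r) ≤ matOpNorm (G * D ^ r) := by
  have hDr : IsUnit (D ^ r).det := by simp [det_pow, det_eq_one_of_eq_firstDifference hD]
  rw [inv_pow'] at hΦd
  set M := (D ^ r)⁻¹ * Φᵀ
  have hM : IsUnit (Mᵀ * M).det := isUnit_det_transpose_mul_self_of_rank_eq_card <| by
    rw [rank_mul_eq_right_of_isUnit_det _ _ (isUnit_nonsing_inv_det _ hDr), rank_transpose,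
      hrank, Fintype.card_fin]
  have hΦdD : Φd * D ^ r = pinv M := by
    rw [hΦd, Matrix.mul_assoc, nonsing_inv_mul _ hDr, Matrix.mul_one]
  refine ⟨by rw [hΦd, Matrix.mul_assoc, pinv_mul_self hM], fun G hG => ?_⟩
  rw [hΦdD]
  refine matOpNorm_pinv_le_of_mul_eq_one hM ?_
  rw [Matrix.mul_assoc, ← Matrix.mul_assoc (D ^ r), mul_nonsing_inv _ hDr, Matrix.one_mul, hG]

/-- The `r`-th order Sobolev dual `Φ̃^{(r)} = (D^{−r}Φᵀ)† D^{−r}` of a full-row-rank frame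
`Φ` is a dual frame of `Φ`, and among all dual frames it minimizes `‖Φ̃ D^r‖_{2→2}`. -/
theorem stmt_11 (n N : ℕ) (hn : 0 < n) (r : ℕ) (hr : 1 ≤ r)
    (Φ : Matrix (Fin n) (Fin N) ℝ) (hrank : Φ.rank = n)
    (D : Matrix (Fin N) (Fin N) ℝ)
    (hD : ∀ i j : Fin N, D i j =
      if (i : ℕ) = j then 1 else if (j : ℕ) + 1 = i then -1 else 0)
    (Φd : Matrix (Fin n) (Fin N) ℝ)
    (hΦd : Φd = pinv ((D⁻¹) ^ r * Φ.transpose) * (D⁻¹) ^ r) :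
    Φd * Φ.transpose = 1 ∧
    ∀ G : Matrix (Fin n) (Fin N) ℝ, G * Φ.transpose = 1 →
      matOpNorm (Φd * D ^ r) ≤ matOpNorm (G * D ^ r) :=
  stmt_11_general n N r Φ hrank D hD Φd hΦd
end
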